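/- arXiv:2102.01242 — 4 statements merged into one kernel-verified Lean document; each statement's English description precedes it below -/
import Mathlib

section
/- Let h be a real analytic function on a neighborhood of 0 in ℝ^n with h(0) = 0, and let T_{2d-1}h denote its Taylor polynomial of total degree 2d−1 at 0, R_{2d-1}h = h − T_{2d-1}h. If there exist positive constants r, c, α with |h(u)| ≥ c‖u‖^α for ‖u‖ < r, and 2d > α, then lim_{u→0} (u₁^{2d} + ⋯ + u_n^{2d}) / T_{2d-1}h(u) = 0. -/
open Filter Finset

/-- If `h` satisfies a Łojasiewicz bound `|h u| ≥ c‖u‖^α` near `0` and `2d > α`, then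
`(u₁^{2d}+⋯+u_n^{2d})/T_{2d-1}h(u) → 0` as `u → 0`, where `T_{2d-1}h` is the Taylor
polynomial of `h` at `0` of total degree `2d-1`. -/
theorem tendsto_pow_sum_div_taylor (n d : ℕ) (hd : 1 ≤ d)
    (h : EuclideanSpace ℝ (Fin n) → ℝ)
    (p : FormalMultilinearSeries ℝ (EuclideanSpace ℝ (Fin n)) ℝ)
    (hp : HasFPowerSeriesAt h p 0) (h0 : h 0 = 0)
    (r c α : ℝ) (hr : 0 < r) (hc : 0 < c) (hα : 0 < α)
    (hloj : ∀ u : EuclideanSpace ℝ (Fin n), ‖u‖ < r → c * ‖u‖ ^ α ≤ |h u|)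
    (hdα : α < 2 * d)
    (T : EuclideanSpace ℝ (Fin n) → ℝ)
    (hT : ∀ u, T u = ∑ i ∈ Finset.range (2 * d), p i (fun _ => u)) :
    Tendsto (fun u : EuclideanSpace ℝ (Fin n) => (∑ j, u j ^ (2 * d)) / T u)
      (nhdsWithin 0 {u | T u ≠ 0}) (nhds 0) := by
  have hcoord : ∀ (u : EuclideanSpace ℝ (Fin n)) (j : Fin n), |u j| ≤ ‖u‖ := by
    intro u j
    rw [EuclideanSpace.norm_eq, show |u j| = Real.sqrt (‖u j‖ ^ 2) by
      rw [Real.sqrt_sq_eq_abs]; simp]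
    exact Real.sqrt_le_sqrt (Finset.single_le_sum (f := fun i => ‖u i‖ ^ 2)
      (fun i _ => sq_nonneg _) (Finset.mem_univ j))
  -- the remainder is O(‖u‖^{2d})
  have hO : (fun u => h u - T u) =O[nhds (0 : EuclideanSpace ℝ (Fin n))]
      fun u => ‖u‖ ^ (2 * d) := by
    have h1 := hp.isBigO_sub_partialSum_pow (2 * d)
    simp only [zero_add] at h1
    refine h1.congr (fun u => ?_) (fun u => rfl)
    rw [hT u]; rfl
  obtain ⟨C, hC⟩ := hO.bound
  set C' : ℝ := max C 1 with hC'def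
  have hC'pos : (0 : ℝ) < C' := lt_of_lt_of_le one_pos (le_max_right _ _)
  have hrem : ∀ᶠ u in nhds (0 : EuclideanSpace ℝ (Fin n)),
      |h u - T u| ≤ C' * ‖u‖ ^ (2 * d) := by
    filter_upwards [hC] with u hu
    calc |h u - T u| = ‖h u - T u‖ := rfl
      _ ≤ C * ‖(‖u‖ ^ (2 * d))‖ := hu
      _ ≤ C' * ‖u‖ ^ (2 * d) := by
          rw [Real.norm_eq_abs, abs_of_nonneg (by positivity)]
          exact mul_le_mul_of_nonneg_right (le_max_left _ _) (by positivity)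
  have hβ : (0 : ℝ) < 2 * d - α := by linarith
  -- ‖u‖^(2d-α) → 0
  have h2 : Tendsto (fun u : EuclideanSpace ℝ (Fin n) => ‖u‖ ^ ((2 * d : ℝ) - α))
      (nhds 0) (nhds 0) := by
    have hn : Tendsto (fun u : EuclideanSpace ℝ (Fin n) => ‖u‖) (nhds 0) (nhds 0) := by
      simpa using (continuous_norm (E := EuclideanSpace ℝ (Fin n))).tendsto 0
    have hr2 : Tendsto (fun x : ℝ => x ^ ((2 * d : ℝ) - α)) (nhds 0) (nhds 0) := by
      have := (Real.continuousAt_rpow_const 0 ((2 * d : ℝ) - α) (Or.inr hβ.le)).tendsto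
      rwa [Real.zero_rpow (ne_of_gt hβ)] at this
    exact hr2.comp hn
  have hsmall : ∀ᶠ u in nhds (0 : EuclideanSpace ℝ (Fin n)),
      ‖u‖ ^ ((2 * d : ℝ) - α) ≤ c / (2 * C') := by
    have : (0 : ℝ) < c / (2 * C') := by positivity
    exact h2.eventually (ge_mem_nhds this)
  have hball : ∀ᶠ u in nhds (0 : EuclideanSpace ℝ (Fin n)), ‖u‖ < r := by
    have := Metric.ball_mem_nhds (0 : EuclideanSpace ℝ (Fin n)) hr
    filter_upwards [this] with u hu
    simpa [dist_eq_norm] using hu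
  -- squeeze
  apply squeeze_zero_norm'
    (a := fun u : EuclideanSpace ℝ (Fin n) => (2 * n / c) * ‖u‖ ^ ((2 * d : ℝ) - α))
  · filter_upwards [nhdsWithin_le_nhds hrem, nhdsWithin_le_nhds hsmall,
      nhdsWithin_le_nhds hball] with u hu1 hu2 hu3
    rcases eq_or_ne u 0 with rfl | hu0
    · have : (∑ j, (0 : EuclideanSpace ℝ (Fin n)) j ^ (2 * d)) = 0 := by
        apply Finset.sum_eq_zero
        intro j _
        simp [zero_pow, Nat.mul_ne_zero two_ne_zero (by omega : d ≠ 0)]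
      rw [this]
      simp [Real.zero_rpow (ne_of_gt hβ)]
    · set t : ℝ := ‖u‖ with ht
      have htpos : 0 < t := norm_pos_iff.mpr hu0
      have hsplit : (t : ℝ) ^ (2 * d) = t ^ α * t ^ ((2 * d : ℝ) - α) := by
        rw [← Real.rpow_add htpos, ← Real.rpow_natCast t (2 * d)]
        norm_num
      -- remainder bound in terms of t^α
      have hrem2 : |h u - T u| ≤ (c / 2) * t ^ α := by
        calc |h u - T u| ≤ C' * t ^ (2 * d) := hu1
          _ = C' * t ^ ((2 * d : ℝ) - α) * t ^ α := by rw [hsplit]; ring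
          _ ≤ C' * (c / (2 * C')) * t ^ α := by
              apply mul_le_mul_of_nonneg_right _ (Real.rpow_nonneg htpos.le α)
              exact mul_le_mul_of_nonneg_left hu2 hC'pos.le
          _ = (c / 2) * t ^ α := by field_simp
      have hTlb : (c / 2) * t ^ α ≤ |T u| := by
        have h1 := hloj u hu3
        have h2 := abs_sub_abs_le_abs_sub (h u) (h u - T u)
        simp only [sub_sub_cancel] at h2
        nlinarith [Real.rpow_nonneg htpos.le α]
      have hTpos : 0 < |T u| := lt_of_lt_of_le (by positivity) hTlb
      have hnum : |∑ j, u j ^ (2 * d)| ≤ n * t ^ (2 * d) := by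
        calc |∑ j, u j ^ (2 * d)| ≤ ∑ j, |u j ^ (2 * d)| := Finset.abs_sum_le_sum_abs _ _
          _ ≤ ∑ _j : Fin n, t ^ (2 * d) := by
              apply Finset.sum_le_sum
              intro j _
              rw [abs_pow]
              exact pow_le_pow_left₀ (abs_nonneg _) (hcoord u j) _
          _ = n * t ^ (2 * d) := by simp [mul_comm]
      calc ‖(∑ j, u j ^ (2 * d)) / T u‖ = |∑ j, u j ^ (2 * d)| / |T u| := by
            rw [Real.norm_eq_abs, abs_div]
        _ ≤ (n * t ^ (2 * d)) / ((c / 2) * t ^ α) := by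
            exact div_le_div₀ (by positivity) hnum (by positivity) hTlb
        _ = (2 * n / c) * t ^ ((2 * d : ℝ) - α) := by
            rw [hsplit]
            have hta : (0 : ℝ) < t ^ α := Real.rpow_pos_of_pos htpos α
            field_simp
  · have := (h2.const_mul (2 * n / c)).mono_left
      (nhdsWithin_le_nhds (s := {u : EuclideanSpace ℝ (Fin n) | T u ≠ 0}))
    simpa using this
end

section
/- Let h be real analytic on a neighborhood of 0 in ℝ^n with h(0)=0, and suppose 0 is not an isolated zero of h but is an isolated zero of T_{2d-1}h. Then there exists a constant δ > 0 and a sequence u_k → 0, u_k ≠ 0, such that (u_{k,1}^{2d}+⋯+u_{k,n}^{2d})/|T_{2d-1}h(u_k)| ≥ δ for all k; in particular lim_{u→0}(u₁^{2d}+⋯+u_n^{2d})/T_{2d-1}h(u) is not 0. -/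
open Filter

/-- If `0` is a non-isolated zero of `h` but an isolated zero of `T_{2d-1}h`, then there
is `δ > 0` and a sequence of nonzero points `u_k → 0` with
`(∑ᵢ u_{k,i}^{2d})/|T_{2d-1}h(u_k)| ≥ δ`; in particular the limit of the quotient at `0`
is not `0`. -/
theorem not_tendsto_zero_of_taylor_zero_isolated (n d : ℕ)
    (h : EuclideanSpace ℝ (Fin n) → ℝ)
    (p : FormalMultilinearSeries ℝ (EuclideanSpace ℝ (Fin n)) ℝ)
    (hp : HasFPowerSeriesAt h p 0) (h0 : h 0 = 0)
    (hniso : ∀ ρ > (0 : ℝ), ∃ u : EuclideanSpace ℝ (Fin n), u ≠ 0 ∧ ‖u‖ < ρ ∧ h u = 0)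
    (T : EuclideanSpace ℝ (Fin n) → ℝ)
    (hT : ∀ u, T u = ∑ i ∈ Finset.range (2 * d), p i (fun _ => u))
    (hTiso : ∃ ρ > (0 : ℝ), ∀ u : EuclideanSpace ℝ (Fin n), ‖u‖ < ρ → T u = 0 → u = 0) :
    (∃ δ > (0 : ℝ), ∃ u : ℕ → EuclideanSpace ℝ (Fin n),
        Tendsto u atTop (nhds 0) ∧ (∀ k, u k ≠ 0) ∧ (∀ k, T (u k) ≠ 0) ∧
        ∀ k, δ ≤ (∑ j, (u k) j ^ (2 * d)) / |T (u k)|) ∧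
      ¬ Tendsto (fun u : EuclideanSpace ℝ (Fin n) => (∑ j, u j ^ (2 * d)) / T u)
        (nhdsWithin 0 {u | T u ≠ 0}) (nhds 0) := by
  obtain ⟨ρT, hρT, hTiso⟩ := hTiso
  -- d must be positive
  have hd : 0 < d := by
    rcases Nat.eq_zero_or_pos d with rfl | hd
    · obtain ⟨u, hu, hur, -⟩ := hniso ρT hρT
      refine absurd (hTiso u hur ?_) hu
      simp [hT]
    · exact hd
  -- remainder bound
  have hO := hp.isBigO_sub_partialSum_pow (2 * d)
  rw [Asymptotics.isBigO_iff] at hO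
  obtain ⟨C, hC⟩ := hO
  rw [Metric.eventually_nhds_iff] at hC
  obtain ⟨ε, hε, hC⟩ := hC
  set M : ℝ := max C 1 with hMdef
  have hM0 : (0:ℝ) < M := lt_of_lt_of_le one_pos (le_max_right _ _)
  have hbound : ∀ u : EuclideanSpace ℝ (Fin n), ‖u‖ < ε → h u = 0 →
      |T u| ≤ M * ‖u‖ ^ (2 * d) := by
    intro u hu hhu
    have h1 := hC (y := u) (by simpa [dist_zero_right] using hu)
    have h2 : T u = p.partialSum (2 * d) u := hT u
    rw [zero_add, hhu, ← h2, zero_sub, norm_neg, Real.norm_eq_abs] at h1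
    calc |T u| ≤ C * ‖‖u‖ ^ (2 * d)‖ := h1
      _ ≤ M * ‖u‖ ^ (2 * d) := by
          rw [Real.norm_eq_abs, abs_of_nonneg (by positivity)]
          exact mul_le_mul_of_nonneg_right (le_max_left _ _) (by positivity)
  -- numerator lower bound
  set N : ℝ := (n : ℝ) ^ (d - 1) with hNdef
  have hnum : ∀ u : EuclideanSpace ℝ (Fin n), ‖u‖ ^ (2 * d) / N ≤ ∑ j, u j ^ (2 * d) := by
    intro u
    have h1 : ‖u‖ ^ (2 * d) = (∑ j, u j ^ 2) ^ d := by
      rw [pow_mul, EuclideanSpace.norm_eq, Real.sq_sqrt (by positivity)]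
      congr 1
      exact Finset.sum_congr rfl fun j _ => by rw [Real.norm_eq_abs, sq_abs]
    have key := pow_sum_div_card_le_sum_pow (s := Finset.univ)
      (f := fun j : Fin n => u j ^ 2) (fun i _ => sq_nonneg _) (d - 1)
    rw [Nat.sub_add_cancel hd] at key
    simp only [Finset.card_univ, Fintype.card_fin] at key
    calc ‖u‖ ^ (2 * d) / N = (∑ j, u j ^ 2) ^ d / (n : ℝ) ^ (d - 1) := by rw [h1, hNdef]
      _ ≤ ∑ j, (u j ^ 2) ^ d := key
      _ = ∑ j, u j ^ (2 * d) := by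
          exact Finset.sum_congr rfl fun j _ => (pow_mul _ 2 d).symm
  have hN0 : (0:ℝ) < N := by
    rcases Nat.eq_zero_or_pos n with rfl | hn
    · obtain ⟨u, hu, -, -⟩ := hniso 1 one_pos
      exact absurd (Subsingleton.elim u 0) hu
    · have : (0:ℝ) < (n:ℝ) := by exact_mod_cast hn
      positivity
  set δ : ℝ := 1 / (N * M) with hδdef
  have hδ : 0 < δ := by positivity
  -- the sequence
  have hseq : ∀ k : ℕ, ∃ u : EuclideanSpace ℝ (Fin n),
      u ≠ 0 ∧ ‖u‖ < min (min ρT ε) (1 / (k + 1 : ℝ)) ∧ h u = 0 := by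
    intro k
    exact hniso _ (lt_min (lt_min hρT hε) (by positivity))
  choose u hu0 hur hhu using hseq
  have hukρ : ∀ k, ‖u k‖ < ρT := fun k =>
    (hur k).trans_le ((min_le_left _ _).trans (min_le_left _ _))
  have hukε : ∀ k, ‖u k‖ < ε := fun k =>
    (hur k).trans_le ((min_le_left _ _).trans (min_le_right _ _))
  have hTne : ∀ k, T (u k) ≠ 0 := fun k hz => hu0 k (hTiso _ (hukρ k) hz)
  have htend : Tendsto u atTop (nhds 0) := by
    exact squeeze_zero_norm (fun k => ((hur k).trans_le (min_le_right _ _)).le)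
      tendsto_one_div_add_atTop_nhds_zero_nat
  have hbd : ∀ k, δ ≤ (∑ j, (u k) j ^ (2 * d)) / |T (u k)| := by
    intro k
    have hTpos : 0 < |T (u k)| := abs_pos.2 (hTne k)
    have hupos : (0:ℝ) < ‖u k‖ ^ (2 * d) := by
      have := norm_pos_iff.2 (hu0 k)
      positivity
    rw [le_div_iff₀ hTpos]
    calc δ * |T (u k)| ≤ δ * (M * ‖u k‖ ^ (2 * d)) :=
          mul_le_mul_of_nonneg_left (hbound _ (hukε k) (hhu k)) hδ.le
      _ = ‖u k‖ ^ (2 * d) / N := by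
          rw [hδdef]; field_simp
      _ ≤ ∑ j, (u k) j ^ (2 * d) := hnum _
  refine ⟨⟨δ, hδ, u, htend, hu0, hTne, hbd⟩, ?_⟩
  intro hlim
  have htend' : Tendsto u atTop (nhdsWithin 0 {v | T v ≠ 0}) :=
    tendsto_nhdsWithin_of_tendsto_nhds_of_eventually_within u htend
      (Eventually.of_forall fun k => hTne k)
  have hcomp := hlim.comp htend'
  obtain ⟨K, hK⟩ := Metric.tendsto_atTop.mp hcomp δ hδ
  have hk := hK K le_rfl
  set k := K
  have hnumnn : (0:ℝ) ≤ ∑ j, (u k) j ^ (2 * d) :=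
    Finset.sum_nonneg fun j _ => (even_two_mul d).pow_nonneg _
  have habs : |(∑ j, (u k) j ^ (2 * d)) / T (u k)|
      = (∑ j, (u k) j ^ (2 * d)) / |T (u k)| := by
    rw [abs_div, abs_of_nonneg hnumnn]
  rw [Function.comp_apply, Real.dist_eq, sub_zero, habs] at hk
  exact absurd (hbd k) (not_le.2 hk)
end

section
/- Let n ≥ 1 and h(x,y) = (x^n)² + (x − y^n)². Then h has an isolated zero at (0,0), and for every d ≤ n², the limit lim_{(x,y)→(0,0)} (x^{2d} + y^{2d})/h(x,y) is not 0 (in fact h(t^n, t) = t^{2n²}, so along this curve the quotient does not tend to 0). -/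
/-!
The two summands of `h` vanish together only when `x = 0` and then `y ^ n = x = 0`, so the
origin is an isolated zero. Along the curve `t ↦ (t ^ n, t)` the second summand vanishes
identically and `h` drops to `t ^ (2 n²)`, while the numerator is at least `t ^ (2 d)`; for
`0 < t ≤ 1` and `d ≤ n²` the quotient is therefore at least `1`.
-/

open Filter Topology

lemma eq_zero_of_pow_sq_add_sub_pow_sq_eq_zero {x y : ℝ} {n : ℕ}
    (h : (x ^ n) ^ 2 + (x - y ^ n) ^ 2 = 0) : x = 0 ∧ y = 0 := by
  obtain ⟨hxn, hxy⟩ := (add_eq_zero_iff_of_nonneg (sq_nonneg _) (sq_nonneg _)).mp h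
  have hx : x = 0 := (pow_eq_zero_iff'.mp (sq_eq_zero_iff.mp hxn)).1
  have hyn : y ^ n = 0 := by rw [← sub_eq_zero.mp (sq_eq_zero_iff.mp hxy), hx]
  exact ⟨hx, (pow_eq_zero_iff'.mp hyn).1⟩

lemma tendsto_pow_prodMk_nhdsGT_zero {n : ℕ} (hn : n ≠ 0) :
    Tendsto (fun t : ℝ => (t ^ n, t)) (𝓝[>] 0) (𝓝[≠] (0 : ℝ × ℝ)) := by
  refine tendsto_nhdsWithin_iff.mpr ⟨?_, ?_⟩
  · exact (((continuous_pow n).prodMk continuous_id).tendsto' 0 0 (by simp [hn])).mono_left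
      nhdsWithin_le_nhds
  · filter_upwards [self_mem_nhdsWithin] with t (ht : 0 < t)
    exact fun h0 => ht.ne' (congrArg Prod.snd h0)

lemma one_le_add_pow_div_pow {s t : ℝ} (hs : 0 ≤ s) (ht₀ : 0 < t) (ht₁ : t ≤ 1) {j k : ℕ}
    (hjk : j ≤ k) : 1 ≤ (s + t ^ j) / t ^ k := by
  rw [one_le_div (pow_pos ht₀ k)]
  exact (pow_le_pow_of_le_one ht₀.le ht₁ hjk).trans (le_add_of_nonneg_left hs)

/-- For `h(x,y) = x^{2n} + (x - y^n)²` with `n ≥ 1`, the origin is an isolated zero of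
`h`, `h(t^n, t) = t^{2n²}`, and for every `d ≤ n²` the quotient
`(x^{2d}+y^{2d})/h(x,y)` does not tend to `0` as `(x,y) → (0,0)`. -/
theorem kollar_example (n : ℕ) (hn : 1 ≤ n)
    (h : ℝ × ℝ → ℝ) (hh : ∀ q : ℝ × ℝ, h q = (q.1 ^ n) ^ 2 + (q.1 - q.2 ^ n) ^ 2) :
    (∀ q : ℝ × ℝ, h q = 0 → q = 0) ∧
    (∀ t : ℝ, h (t ^ n, t) = t ^ (2 * n ^ 2)) ∧
    ∀ d : ℕ, d ≤ n ^ 2 →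
      ¬ Tendsto (fun q : ℝ × ℝ => (q.1 ^ (2 * d) + q.2 ^ (2 * d)) / h q)
        (nhdsWithin 0 {q | q ≠ 0}) (nhds 0) := by
  have hcurve (t : ℝ) : h (t ^ n, t) = t ^ (2 * n ^ 2) := by
    rw [hh, sub_self]
    ring
  refine ⟨fun q hq => ?_, hcurve, fun d hd hlim => ?_⟩
  · obtain ⟨hx, hy⟩ := eq_zero_of_pow_sq_add_sub_pow_sq_eq_zero (hh q ▸ hq)
    exact Prod.ext hx hy
  · have hquot : ∀ᶠ t in 𝓝[>] (0 : ℝ),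
        1 ≤ ((t ^ n) ^ (2 * d) + t ^ (2 * d)) / h (t ^ n, t) := by
      filter_upwards [Ioo_mem_nhdsGT zero_lt_one] with t ht
      rw [hcurve]
      exact one_le_add_pow_div_pow (by have := ht.1; positivity) ht.1 ht.2.le (Nat.mul_le_mul_left 2 hd)
    have := ge_of_tendsto (hlim.comp (tendsto_pow_prodMk_nhdsGT_zero (by omega))) hquot
    norm_num at this
end

section
/- The polynomial p(x,y) = y⁴ + (y − x²)² has an isolated zero at (0,0), but h(x,y) = y⁴ + (y − x²)² − x⁶ − y⁶ does not have an isolated zero at (0,0): every neighborhood of (0,0) contains a point (x,y) ≠ (0,0) with h(x,y) = 0. -/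
/-- The polynomial `p(x,y) = y⁴ + (y - x²)²` has an isolated zero at the origin, but
`h(x,y) = y⁴ + (y - x²)² - x⁶ - y⁶` does not: every neighborhood of the origin contains
a nonzero zero of `h`. -/
theorem taylor_isolated_but_function_not_isolated :
    (∀ q : ℝ × ℝ, q.2 ^ 4 + (q.2 - q.1 ^ 2) ^ 2 = 0 → q = 0) ∧
    ∀ ε > (0 : ℝ), ∃ q : ℝ × ℝ, q ≠ 0 ∧ ‖q‖ < ε ∧
      q.2 ^ 4 + (q.2 - q.1 ^ 2) ^ 2 - q.1 ^ 6 - q.2 ^ 6 = 0 := by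
  constructor
  · rintro ⟨x, y⟩ h
    simp only at h
    have hy4 : y ^ 4 = 0 := le_antisymm (by nlinarith [sq_nonneg (y - x^2)]) (by positivity)
    have hy : y = 0 := by
      have := pow_eq_zero_iff (n := 4) (by norm_num) |>.mp hy4
      exact this
    have hx2 : (0 - x^2)^2 = 0 := by rw [hy] at h; linarith [hy4, h]
    have hx4 : x ^ 4 = 0 := by linear_combination hx2
    have hx : x = 0 := pow_eq_zero_iff (n := 4) (by norm_num) |>.mp hx4
    simp [Prod.ext_iff, hx, hy]
  · intro ε hε
    set x : ℝ := min ε 1 / 2 with hxdef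
    have hx0 : 0 < x := by positivity
    have hxε : x < ε := by
      have := min_le_left ε 1
      simp only [hxdef]; linarith
    have hx1 : x < 1 := by
      have := min_le_right ε 1
      simp only [hxdef]; linarith
    set f : ℝ → ℝ := fun y => y ^ 4 + (y - x ^ 2) ^ 2 - x ^ 6 - y ^ 6 with hf
    have hcont : ContinuousOn f (Set.Icc 0 (x^2)) := by
      apply Continuous.continuousOn; fun_prop
    have hx2lt : x ^ 2 < 1 := by nlinarith
    have hfb : f (x^2) < 0 := by
      simp only [hf]
      have h8 : x ^ 8 ≤ x ^ 6 := pow_le_pow_of_le_one (le_of_lt hx0) (le_of_lt hx1) (by norm_num)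
      nlinarith [pow_pos hx0 12, h8]
    have hfa : 0 < f 0 := by
      simp only [hf]
      nlinarith [pow_pos hx0 4, hx2lt]
    have hmem : (0:ℝ) ∈ Set.Icc (f (x^2)) (f 0) := ⟨le_of_lt hfb, le_of_lt hfa⟩
    obtain ⟨y, hy, hfy⟩ := intermediate_value_Icc' (le_of_lt (by positivity : (0:ℝ) < x^2)) hcont hmem
    refine ⟨(x, y), ?_, ?_, ?_⟩
    · intro h
      have : x = 0 := congrArg Prod.fst h
      exact absurd this (ne_of_gt hx0)
    · have hyx : y ≤ x := by nlinarith [hy.2]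
      have hy0 : 0 ≤ y := hy.1
      rw [Prod.norm_def]
      simp only [Real.norm_eq_abs]
      rw [abs_of_pos hx0, abs_of_nonneg hy0]
      exact lt_of_le_of_lt (max_le le_rfl hyx) hxε
    · simpa [hf] using hfy
end
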